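/- arXiv:1805.07261 — 2 statements merged into one kernel-verified Lean document; each statement's English description precedes it below -/
import Mathlib

section
/- Let λ be a partition and k a strictly positive integer. In the ring of symmetric functions, k · (∂/∂p_k) s_λ = Σ_{μ: μ→_k λ} (−1)^{ht(λ∖μ)} s_μ, where the sum is over all partitions μ such that λ∖μ is a k-ribbon. -/
/-!
Write `s_λ` as the Jacobi–Trudi determinant `det (h_{c_i + j})` with shifted parts
`c_i = λ_i - i`. Since `k ∂h_n/∂p_k = h_{n-k}`, the derivation `k ∂/∂p_k` turns the determinant
into the sum over rows `i` of the same determinant with `c_i` lowered to `c_i - k`. That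
determinant vanishes when `c_i - k` equals another `c_j` or is `≤ -l(λ)`; otherwise moving
`c_i - k` down to its sorted position `t` costs `t - i` row swaps and yields the shifted parts of
the partition `μ` for which `λ ∖ μ` is the `k`-ribbon occupying rows `i, …, t`, whose height is
`t - i`. Conversely every `k`-ribbon arises in this way from its top row.
-/

open scoped BigOperators
open MeasureTheory

noncomputable section

namespace RMT

attribute [local instance] Classical.propDecidable

/-! ### Sequences of complex numbers -/

/-- `e(X)`, the product of all elements of the sequence `X`. -/
def listProd (X : List ℂ) : ℂ := X.prod

/-- `-X`, the sequence of negatives. -/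
def negL (X : List ℂ) : List ℂ := X.map (fun z => -z)

/-- `X⁻¹`, the sequence of inverses. -/
def invL (X : List ℂ) : List ℂ := X.map (fun z => z⁻¹)

/-- `abs(X)`, the sequence of absolute values (as complex numbers). -/
def absL (X : List ℂ) : List ℂ := X.map (fun z => ((‖z‖ : ℝ) : ℂ))

/-- `Δ(X; Y) = ∏_{x ∈ X, y ∈ Y} (x - y)`. -/
def pairDelta (X Y : List ℂ) : ℂ := (X.map (fun x => (Y.map (fun y => x - y)).prod)).prod

/-- The power sum `p_k(X) = ∑_{x ∈ X} x^k`. -/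
def pSym (k : ℕ) (X : List ℂ) : ℂ := (X.map (fun z => z ^ k)).sum

/-- `p_λ(X) = ∏_i p_{λ_i}(X)` for a multiset of parts. -/
def pMult (p : Multiset ℕ) (X : List ℂ) : ℂ := (p.map (fun k => pSym k X)).prod

/-- The complete homogeneous symmetric polynomial `h_k(X)`. -/
def hSym (k : ℕ) (X : List ℂ) : ℂ :=
  ∑ α ∈ (Finset.univ : Finset (Fin X.length → Fin (k + 1))).filter
      (fun α => (∑ i, ((α i : ℕ))) = k),
    ∏ i, X.get i ^ ((α i : ℕ))

/-- `h_k(X)` for integer `k`, vanishing for negative `k`. -/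
def hSymZ (k : ℤ) (X : List ℂ) : ℂ := if 0 ≤ k then hSym k.toNat X else 0

/-- The monomial symmetric polynomial `m_λ(X)`, where `λ` is given as the multiset of
its parts: the sum of `x_1^{α_1} ⋯ x_n^{α_n}` over all distinct rearrangements `α` of `λ`
(with zero parts removed) padded with zeros to length `n = l(X)`; it vanishes when `λ` has more
positive parts than `l(X)`. -/
def mSym (p : Multiset ℕ) (X : List ℂ) : ℂ :=
  ∑ α ∈ (Finset.univ : Finset (Fin X.length → Fin (p.sum + 1))).filter
      (fun α => (Finset.univ.val.map (fun i => ((α i : ℕ)))) =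
        (p.filter (fun x => x ≠ 0)) +
          Multiset.replicate (X.length - (p.filter (fun x => x ≠ 0)).card) 0),
    ∏ i, X.get i ^ ((α i : ℕ))

/-! ### Partitions, modelled as Young diagrams -/

/-- The multiset of (positive) parts of a partition. -/
def parts (l : YoungDiagram) : Multiset ℕ := (l.rowLens : Multiset ℕ)

/-- `l(λ)`, the number of positive parts. -/
def plen (l : YoungDiagram) : ℕ := l.colLen 0

/-- `|λ|`, the size of the partition. -/
def psize (l : YoungDiagram) : ℕ := l.cells.card

/-- `m_i(λ)`, the number of parts equal to `i`. -/
def multOf (l : YoungDiagram) (i : ℕ) : ℕ := (parts l).count i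

/-- `z_λ = ∏_{i ≥ 1} i^{m_i(λ)} m_i(λ)!`. -/
def zPart (l : YoungDiagram) : ℕ :=
  ∏ i ∈ (parts l).toFinset, i ^ multOf l i * (multOf l i).factorial

/-- The parts of `λ - ⟨1^{l(λ)}⟩`, i.e. of `λ` with 1 subtracted from every (positive) part. -/
def partsMinusOne (l : YoungDiagram) : Multiset ℕ := (parts l).map (fun a => a - 1)

/-- The Schur polynomial attached to a list of (integer) parts, via the Jacobi–Trudi
determinant; this is the polynomial extension of the bialternant `det(x_i^{λ_j+n-j})/Δ(X)`. -/
def schurL (p : List ℤ) (X : List ℂ) : ℂ :=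
  Matrix.det (Matrix.of (fun i j : Fin p.length => hSymZ (p.get i + (j : ℤ) - (i : ℤ)) X))

/-- The Schur polynomial `s_λ(X)` of a partition. -/
def schur (l : YoungDiagram) (X : List ℂ) : ℂ :=
  schurL (l.rowLens.map (fun a => (a : ℤ))) X

/-! ### Ribbons -/

/-- Two boxes are edgewise adjacent. -/
def adjCell (c d : ℕ × ℕ) : Prop :=
  (c.1 = d.1 ∧ (c.2 = d.2 + 1 ∨ d.2 = c.2 + 1)) ∨
    (c.2 = d.2 ∧ (c.1 = d.1 + 1 ∨ d.1 = c.1 + 1))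

/-- A finite set of boxes is edgewise connected. -/
def ConnCells (s : Finset (ℕ × ℕ)) : Prop :=
  ∀ c ∈ s, ∀ d ∈ s, Relation.ReflTransGen (fun a b => a ∈ s ∧ b ∈ s ∧ adjCell a b) c d

/-- `IsRibbon μ λ k` says that `μ ⊆ λ` and the skew diagram `λ ∖ μ` is a `k`-ribbon:
it has `k` boxes, is edgewise connected, and contains no 2×2 block of boxes.
(This is the relation written `μ →_k λ`.) -/
def IsRibbon (μ l : YoungDiagram) (k : ℕ) : Prop :=
  μ ≤ l ∧ (l.cells \ μ.cells).card = k ∧ ConnCells (l.cells \ μ.cells) ∧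
    ¬ ∃ i j : ℕ, ((i, j) ∈ l.cells \ μ.cells ∧ (i + 1, j) ∈ l.cells \ μ.cells ∧
      (i, j + 1) ∈ l.cells \ μ.cells ∧ (i + 1, j + 1) ∈ l.cells \ μ.cells)

/-- The height of the skew diagram `λ ∖ μ`: one less than the number of rows it occupies. -/
def ribbonHeight (μ l : YoungDiagram) : ℕ := ((l.cells \ μ.cells).image Prod.fst).card - 1

/-- The rectangular partition `⟨m^n⟩` (n rows of length m). -/
def rect (m n : ℕ) : YoungDiagram :=
  ⟨Finset.range n ×ˢ Finset.range m, by
    intro a b hba ha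
    simp only [Finset.coe_product, Set.mem_prod, Finset.mem_coe, Finset.mem_range] at *
    exact ⟨lt_of_le_of_lt hba.1 ha.1, lt_of_le_of_lt hba.2 ha.2⟩⟩

/-- `HasMNIndex λ m n k` says that the `(m,n)`-index of the partition `λ` is `k`: `k` is the
largest (possibly negative) integer with `k ≤ min{m,n}` such that the box `(m+1-k, n+1-k)`
(in the 1-indexed column/row coordinates of the paper, i.e. the 0-indexed cell
`(n-k, m-k)` in row/column coordinates) does not belong to `λ`. -/
def HasMNIndex (l : YoungDiagram) (m n : ℕ) (k : ℤ) : Prop :=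
  (k ≤ min (m : ℤ) (n : ℤ) ∧ (((n : ℤ) - k).toNat, ((m : ℤ) - k).toNat) ∉ l.cells) ∧
    ∀ k' : ℤ, k' ≤ min (m : ℤ) (n : ℤ) →
      (((n : ℤ) - k').toNat, ((m : ℤ) - k').toNat) ∉ l.cells → k' ≤ k

/-! ### The ring of symmetric functions, modelled as polynomials in the power sums -/

/-- The ring of symmetric functions over `ℂ`: since the power sums `p₁, p₂, …` are
algebraically independent generators, we model it as the polynomial ring in the
variables `p₁, p₂, …`, with variable `n : ℕ` denoting `p_{n+1}`. -/
abbrev Sym := MvPolynomial ℕ ℂ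

/-- The power sum `p_k` (for `k ≥ 1`) as an element of `Sym`. -/
def pGen (k : ℕ) : Sym := MvPolynomial.X (k - 1)

/-- `p_λ = ∏_i p_{λ_i}` as an element of `Sym`. -/
def pMultF (p : Multiset ℕ) : Sym := (p.map pGen).prod

/-- `z_λ` for a multiset of parts. -/
def zMult (p : Multiset ℕ) : ℕ := ∏ i ∈ p.toFinset, i ^ p.count i * (p.count i).factorial

/-- The complete homogeneous symmetric function `h_k = ∑_{|μ| = k} z_μ⁻¹ p_μ` in `Sym`. -/
def hF (k : ℕ) : Sym := ∑ μ : Nat.Partition k, ((zMult μ.parts : ℂ))⁻¹ • pMultF μ.parts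

/-- `h_k` for integer `k`, vanishing for negative `k`. -/
def hFZ (k : ℤ) : Sym := if 0 ≤ k then hF k.toNat else 0

/-- The Schur function `s_λ` as an element of `Sym` (Jacobi–Trudi determinant). -/
def sF (l : YoungDiagram) : Sym :=
  Matrix.det (Matrix.of (fun i j : Fin (plen l) =>
    hFZ ((l.rowLen (i : ℕ) : ℤ) + (j : ℤ) - (i : ℤ))))

/-- The weight `z` of a monomial in the power sums: for `α` with `α i` the exponent of
`p_{i+1}`, this is `∏_i (i+1)^{α i} (α i)!`, so that `⟨p_λ, p_μ⟩ = z_λ δ_{λμ}`. -/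
def zExp (α : ℕ →₀ ℕ) : ℂ :=
  ∏ i ∈ α.support, ((i + 1 : ℕ) : ℂ) ^ (α i) * (Nat.factorial (α i))

/-- The Hall inner product on `Sym`, determined by `⟨p_λ, p_μ⟩ = z_λ δ_{λμ}`. -/
def hallInner (f g : Sym) : ℂ :=
  ∑ α ∈ f.support, MvPolynomial.coeff α f * MvPolynomial.coeff α g * zExp α

/-- The Littlewood–Richardson coefficient `c^λ_{μν} = ⟨s_μ s_ν, s_λ⟩`. -/
def lrCoeff (μ ν l : YoungDiagram) : ℂ := hallInner (sF μ * sF ν) (sF l)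

/-- The Littlewood–Schur function `LS_λ(X; Y) = ∑_{μ,ν} c^λ_{μν} s_μ(X) s_{ν'}(Y)`. -/
def LSfun (l : YoungDiagram) (X Y : List ℂ) : ℂ :=
  ∑ᶠ p : YoungDiagram × YoungDiagram, lrCoeff p.1 p.2 l * schur p.1 X * schur p.2.transpose Y

/-- The derivation operator `∂/∂p_k` (for `k ≥ 1`) on `Sym`. -/
def pderivK (k : ℕ) (f : Sym) : Sym := MvPolynomial.pderiv (k - 1) f

/-- The composite derivation operator `∂/∂p_λ`. -/
def pderivMult (p : Multiset ℕ) (f : Sym) : Sym :=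
  (Multiset.sort p (· ≤ ·)).foldr (fun k g => pderivK k g) f

/-- Evaluation (specialization) of a symmetric function at a finite sequence `X`:
the algebra homomorphism sending each `p_k` to `p_k(X)`. -/
def evalAt (X : List ℂ) : Sym →ₐ[ℂ] ℂ := MvPolynomial.aeval (fun i => pSym (i + 1) X)

/-! ### The unitary group, Haar measure and characteristic polynomials -/

/-- The unitary group `U(N)`. -/
abbrev UG (N : ℕ) := Matrix.unitaryGroup (Fin N) ℂ

instance (N : ℕ) : MeasurableSpace (UG N) := borel _

/-- `μ` is the normalized (probability) Haar measure on `U(N)`. -/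
def IsHaarProb {N : ℕ} (μ : Measure (UG N)) : Prop :=
  IsProbabilityMeasure μ ∧ ∀ g : UG N, Measure.map (fun x => g * x) μ = μ

/-- The characteristic polynomial `χ_g(z) = det(I - z g⁻¹)` of a unitary matrix. -/
def chi {N : ℕ} (g : UG N) (z : ℂ) : ℂ :=
  Matrix.det ((1 : Matrix (Fin N) (Fin N) ℂ) - z • ((g⁻¹ : UG N) : Matrix (Fin N) (Fin N) ℂ))

/-- The derivative `χ'_g`. -/
def chiD {N : ℕ} (g : UG N) (z : ℂ) : ℂ := deriv (chi g) z

/-- `det(-g)`. -/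
def detNeg {N : ℕ} (g : UG N) : ℂ := Matrix.det (-((g : Matrix (Fin N) (Fin N) ℂ)))

/-- The completed characteristic polynomial `Λ_g(z) = det(-g)^{1/2} z^{-N/2} χ_g(z)`,
using principal branches. -/
def Lam {N : ℕ} (g : UG N) (z : ℂ) : ℂ :=
  detNeg g ^ ((1 : ℂ) / 2) * z ^ (-(N : ℂ) / 2) * chi g z

/-- The derivative `Λ'_g`. -/
def LamD {N : ℕ} (g : UG N) (z : ℂ) : ℂ := deriv (Lam g) z

/-- The multiset of eigenvalues of `g`, listed in some order. -/
def eigList {N : ℕ} (g : UG N) : List ℂ :=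
  ((g : Matrix (Fin N) (Fin N) ℂ).charpoly.roots).toList

/-! ### Subsequences -/

/-- The subsequence of `L` consisting of the entries with index in `K` (in order). -/
def subAt (L : List ℂ) (K : Finset ℕ) : List ℂ :=
  (List.filter (fun i : Fin L.length => decide (i.val ∈ K)) (List.finRange L.length)).map L.get

/-- The complementary subsequence of `subAt L K`. -/
def coAt (L : List ℂ) (K : Finset ℕ) : List ℂ :=
  (List.filter (fun i : Fin L.length => decide (i.val ∉ K)) (List.finRange L.length)).map L.get

open MvPolynomial Finset

theorem _root_.Derivation.leibniz_finset_prod {R A M ι : Type*} [CommSemiring R] [CommSemiring A]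
    [AddCommMonoid M] [Algebra R A] [Module A M] [Module R M] (D : Derivation R A M)
    [DecidableEq ι] (s : Finset ι) (f : ι → A) :
    D (∏ i ∈ s, f i) = ∑ i ∈ s, (∏ j ∈ s.erase i, f j) • D (f i) := by
  induction s using Finset.induction_on with
  | empty => simp
  | insert a s ha ih =>
    rw [prod_insert ha, D.leibniz, ih, sum_insert ha, erase_insert ha, smul_sum, add_comm]
    congr 1
    refine sum_congr rfl fun i hi => ?_
    rw [erase_insert_of_ne (ne_of_mem_of_not_mem hi ha).symm,
      prod_insert fun h => ha (mem_of_mem_erase h), mul_smul]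

theorem _root_.Derivation.map_det {R A n : Type*} [CommRing R] [CommRing A] [Algebra R A]
    [Fintype n] [DecidableEq n] (D : Derivation R A A) (M : Matrix n n A) :
    D M.det = ∑ i, (M.updateRow i fun j => D (M i j)).det := by
  simp only [Matrix.det_apply', map_sum, D.leibniz, D.leibniz_finset_prod, Derivation.map_intCast,
    smul_zero, add_zero]
  rw [sum_comm]
  refine sum_congr rfl fun σ _ => ?_
  conv_rhs => rw [← Equiv.sum_comp σ]
  rw [smul_eq_mul, mul_sum]
  refine sum_congr rfl fun i _ => ?_
  rw [← mul_prod_erase univ _ (mem_univ i), Matrix.updateRow_self, smul_eq_mul, mul_comm (D _)]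
  congr 2
  exact prod_congr rfl fun j hj => by
    rw [Matrix.updateRow_ne (σ.injective.ne (ne_of_mem_erase hj))]

lemma hFZ_of_neg {m : ℤ} (hm : m < 0) : hFZ m = 0 := if_neg (not_le.mpr hm)

lemma hFZ_natCast (n : ℕ) : hFZ n = hF n := by simp [hFZ]

lemma hFZ_zero : hFZ 0 = 1 := by
  rw [← Nat.cast_zero, hFZ_natCast, hF, Fintype.sum_unique]
  simp [zMult, pMultF]

lemma pderivK_pGen_self (k : ℕ) : pderivK k (pGen k) = 1 := pderiv_X_self _

lemma pderivK_pGen_of_ne {a k : ℕ} (ha : 0 < a) (hk : 0 < k) (h : a ≠ k) :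
    pderivK k (pGen a) = 0 :=
  pderiv_X_of_ne (by omega)

lemma pMultF_cons (a : ℕ) (p : Multiset ℕ) : pMultF (a ::ₘ p) = pGen a * pMultF p := by
  rw [pMultF, Multiset.map_cons, Multiset.prod_cons, pMultF]

lemma pderivK_pMultF {k : ℕ} (hk : 0 < k) {p : Multiset ℕ} (hp : ∀ a ∈ p, 0 < a) :
    pderivK k (pMultF p) = p.count k • pMultF (p.erase k) := by
  induction p using Multiset.induction_on with
  | empty => simp [pderivK, pMultF]
  | cons a s ih =>
    have ha := hp a (Multiset.mem_cons_self a s)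
    rw [pMultF_cons, pderivK, Derivation.leibniz, ← pderivK, ← pderivK,
      ih fun b hb => hp b (Multiset.mem_cons_of_mem hb), smul_eq_mul, smul_eq_mul]
    by_cases hak : a = k
    · subst hak
      have hcons : s.count a • (pGen a * pMultF (s.erase a)) = s.count a • pMultF s := by
        by_cases hs : a ∈ s
        · rw [← pMultF_cons, Multiset.cons_erase hs]
        · simp [Multiset.count_eq_zero.mpr hs]
      rw [pderivK_pGen_self, Multiset.count_cons_self, Multiset.erase_cons_head, mul_one,
        mul_smul_comm, hcons, add_smul, one_smul]
    · rw [pderivK_pGen_of_ne ha hk hak, mul_zero, add_zero, Multiset.count_cons_of_ne (Ne.symm hak),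
        Multiset.erase_cons_tail _ hak, pMultF_cons, mul_smul_comm]

lemma zMult_eq_prod_of_subset {p : Multiset ℕ} {T : Finset ℕ} (h : p.toFinset ⊆ T) :
    zMult p = ∏ i ∈ T, i ^ p.count i * (p.count i).factorial :=
  prod_subset h fun i _ hi => by simp [Multiset.count_eq_zero.mpr (by simpa using hi)]

lemma zMult_cons (a : ℕ) (p : Multiset ℕ) :
    zMult (a ::ₘ p) = a * (p.count a + 1) * zMult p := by
  have hT : (a ::ₘ p).toFinset = insert a p.toFinset := Multiset.toFinset_cons a p
  rw [zMult_eq_prod_of_subset hT.le, zMult_eq_prod_of_subset (subset_insert a _),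
    ← mul_prod_erase _ _ (mem_insert_self a _), ← mul_prod_erase _ _ (mem_insert_self a _),
    prod_congr rfl fun i hi => by rw [Multiset.count_cons_of_ne (ne_of_mem_erase hi)],
    Multiset.count_cons_self, pow_succ, Nat.factorial_succ]
  ring

lemma zMult_pos {p : Multiset ℕ} (hp : ∀ a ∈ p, 0 < a) : 0 < zMult p :=
  prod_pos fun i hi => by have := hp i (Multiset.mem_toFinset.mp hi); positivity

lemma k_smul_zMult_inv_smul_pderivK_pMultF {k : ℕ} (hk : 0 < k) {p : Multiset ℕ}
    (hp : ∀ a ∈ p, 0 < a) :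
    (k : ℂ) • (zMult p : ℂ)⁻¹ • pderivK k (pMultF p) =
      if k ∈ p then (zMult (p.erase k) : ℂ)⁻¹ • pMultF (p.erase k) else 0 := by
  rw [pderivK_pMultF hk hp]
  split_ifs with h
  · obtain ⟨s, rfl⟩ : ∃ s, p = k ::ₘ s := ⟨_, (Multiset.cons_erase h).symm⟩
    have hk' : (k : ℂ) ≠ 0 := Nat.cast_ne_zero.mpr hk.ne'
    have hs : (zMult s : ℂ) ≠ 0 :=
      Nat.cast_ne_zero.mpr (zMult_pos fun a ha => hp a (Multiset.mem_cons_of_mem ha)).ne'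
    rw [Multiset.erase_cons_head, Multiset.count_cons_self, zMult_cons, ← Nat.cast_smul_eq_nsmul ℂ,
      smul_smul, smul_smul]
    congr 1
    push_cast
    field_simp
  · simp [Multiset.count_eq_zero.mpr h]

def partitionErase {n k : ℕ} (μ : Nat.Partition n) (h : k ∈ μ.parts) :
    Nat.Partition (n - k) where
  parts := μ.parts.erase k
  parts_pos hm := μ.parts_pos (Multiset.mem_of_mem_erase hm)
  parts_sum := by
    have := congrArg Multiset.sum (Multiset.cons_erase h)
    rw [Multiset.sum_cons, μ.parts_sum] at this
    omega

def partitionCons {n k : ℕ} (hk : 0 < k) (hkn : k ≤ n) (ν : Nat.Partition (n - k)) :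
    Nat.Partition n where
  parts := k ::ₘ ν.parts
  parts_pos hm := (Multiset.mem_cons.mp hm).elim (· ▸ hk) ν.parts_pos
  parts_sum := by rw [Multiset.sum_cons, ν.parts_sum]; omega

lemma sum_partition_mem_erase {M : Type*} [AddCommMonoid M] {n k : ℕ} (hk : 0 < k) (hkn : k ≤ n)
    (g : Multiset ℕ → M) :
    ∑ μ : Nat.Partition n with k ∈ μ.parts, g (μ.parts.erase k) =
      ∑ ν : Nat.Partition (n - k), g ν.parts :=
  sum_bij' (fun μ hμ => partitionErase μ (mem_filter.mp hμ).2) (fun ν _ => partitionCons hk hkn ν)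
    (fun _ _ => mem_univ _)
    (fun _ _ => mem_filter.mpr ⟨mem_univ _, Multiset.mem_cons_self _ _⟩)
    (fun _ hμ => Nat.Partition.ext (Multiset.cons_erase (mem_filter.mp hμ).2))
    (fun ν _ => Nat.Partition.ext (Multiset.erase_cons_head k ν.parts))
    (fun _ _ => rfl)

lemma k_smul_pderivK_hF {k : ℕ} (hk : 0 < k) (n : ℕ) :
    (k : ℂ) • pderivK k (hF n) = hFZ (n - k) := by
  have hterm : ∀ μ : Nat.Partition n, (k : ℂ) • pderivK k ((zMult μ.parts : ℂ)⁻¹ • pMultF μ.parts) =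
      if k ∈ μ.parts then (zMult (μ.parts.erase k) : ℂ)⁻¹ • pMultF (μ.parts.erase k) else 0 :=
    fun μ => by
      rw [pderivK, Derivation.map_smul, ← pderivK]
      exact k_smul_zMult_inv_smul_pderivK_pMultF hk fun a ha => μ.parts_pos ha
  have hsum : (k : ℂ) • pderivK k (hF n) =
      ∑ μ : Nat.Partition n, (k : ℂ) • pderivK k ((zMult μ.parts : ℂ)⁻¹ • pMultF μ.parts) := by
    rw [hF, pderivK, map_sum, smul_sum]
    rfl
  rw [hsum, sum_congr rfl fun μ _ => hterm μ, ← sum_filter]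
  by_cases hkn : k ≤ n
  · rw [← Nat.cast_sub hkn, hFZ_natCast, hF,
      ← sum_partition_mem_erase hk hkn fun p => (zMult p : ℂ)⁻¹ • pMultF p]
  · rw [hFZ_of_neg (by omega), sum_eq_zero]
    intro μ hμ
    have := Multiset.le_sum_of_mem (mem_filter.mp hμ).2
    rw [μ.parts_sum] at this
    omega

lemma k_smul_pderivK_hFZ {k : ℕ} (hk : 0 < k) (m : ℤ) :
    (k : ℂ) • pderivK k (hFZ m) = hFZ (m - k) := by
  rcases le_or_gt 0 m with hm | hm
  · obtain ⟨n, rfl⟩ := Int.eq_ofNat_of_zero_le hm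
    rw [hFZ_natCast, k_smul_pderivK_hF hk]
  · rw [hFZ_of_neg hm, hFZ_of_neg (by omega), pderivK, map_zero, smul_zero]

section YoungDiagram

variable {μ l : YoungDiagram}

lemma rowLen_pos_iff_lt_plen {r : ℕ} : 0 < l.rowLen r ↔ r < plen l := by
  rw [← YoungDiagram.mem_iff_lt_rowLen, YoungDiagram.mem_iff_lt_colLen, plen]

lemma rowLen_eq_zero_of_plen_le {r : ℕ} (h : plen l ≤ r) : l.rowLen r = 0 := by
  by_contra h'
  exact absurd (rowLen_pos_iff_lt_plen.mp (Nat.pos_of_ne_zero h')) (not_lt.mpr h)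

lemma mem_cells_iff {r x : ℕ} : (r, x) ∈ l.cells ↔ x < l.rowLen r := by
  rw [YoungDiagram.mem_cells, YoungDiagram.mem_iff_lt_rowLen]

lemma le_iff_rowLen_le : μ ≤ l ↔ ∀ r, μ.rowLen r ≤ l.rowLen r := by
  rw [← YoungDiagram.cells_subset_iff]
  refine ⟨fun h r => ?_, fun h ⟨r, x⟩ hx => ?_⟩
  · by_contra hc
    have := mem_cells_iff.mp (h (mem_cells_iff.mpr (not_le.mp hc)))
    omega
  · exact mem_cells_iff.mpr ((mem_cells_iff.mp hx).trans_le (h r))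

lemma eq_of_rowLen_eq (h : ∀ r, μ.rowLen r = l.rowLen r) : μ = l :=
  le_antisymm (le_iff_rowLen_le.mpr fun r => (h r).le) (le_iff_rowLen_le.mpr fun r => (h r).ge)

lemma mem_sdiff_cells_iff {r x : ℕ} :
    (r, x) ∈ l.cells \ μ.cells ↔ μ.rowLen r ≤ x ∧ x < l.rowLen r := by
  rw [mem_sdiff, mem_cells_iff, mem_cells_iff, not_lt, and_comm]

lemma card_sdiff_cells (hμl : μ ≤ l) {N : ℕ} (hN : plen l ≤ N) :
    ((l.cells \ μ.cells).card : ℤ) = ∑ r ∈ range N, ((l.rowLen r : ℤ) - μ.rowLen r) := by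
  have hrow : ∀ p ∈ l.cells \ μ.cells, p.1 ∈ range N := fun ⟨r, x⟩ hp => by
    have := (mem_sdiff_cells_iff.mp hp).2
    have := rowLen_pos_iff_lt_plen.mp (by omega : 0 < l.rowLen r)
    exact mem_range.mpr (by omega)
  rw [card_eq_sum_card_fiberwise hrow, Nat.cast_sum]
  refine sum_congr rfl fun r _ => ?_
  have hfib : {p ∈ l.cells \ μ.cells | p.1 = r} = (Ico (μ.rowLen r) (l.rowLen r)).image (r, ·) := by
    ext ⟨a, x⟩
    simp only [mem_filter, mem_image, mem_Ico]
    constructor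
    · rintro ⟨hp, rfl⟩
      exact ⟨x, mem_sdiff_cells_iff.mp hp, rfl⟩
    · rintro ⟨y, hy, hyx⟩
      obtain ⟨rfl, rfl⟩ := Prod.mk.inj hyx
      exact ⟨mem_sdiff_cells_iff.mpr hy, rfl⟩
  rw [hfib, card_image_of_injective _ (Prod.mk_right_injective r), Nat.card_Ico,
    Nat.cast_sub ((le_iff_rowLen_le.mp hμl) r)]

def shiftedParts (l : YoungDiagram) (r : ℕ) : ℤ := l.rowLen r - r

lemma shiftedParts_strictAnti (l : YoungDiagram) : StrictAnti (shiftedParts l) :=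
  fun r s h => by have := l.rowLen_anti r s h.le; unfold shiftedParts; omega

lemma shiftedParts_of_plen_le {r : ℕ} (h : plen l ≤ r) : shiftedParts l r = -r := by
  simp [shiftedParts, rowLen_eq_zero_of_plen_le h]

/-- Junk value `⊥` unless `f` is antitone. -/
def diagramOfRowLens (n : ℕ) (f : ℕ → ℕ) : YoungDiagram :=
  if hf : Antitone f then
    ⟨{p ∈ range n ×ˢ range (f 0) | p.2 < f p.1}, fun q p hpq hp => by
      simp only [coe_filter, Set.mem_ofPred_eq, mem_product, mem_range] at hp ⊢
      have := hf hpq.1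
      have := hf (Nat.zero_le p.1)
      have := hpq.1
      have := hpq.2
      omega⟩
  else ⊥

lemma rowLen_diagramOfRowLens {n : ℕ} {f : ℕ → ℕ} (hf : Antitone f) (r : ℕ) :
    (diagramOfRowLens n f).rowLen r = if r < n then f r else 0 := by
  refine eq_of_forall_lt_iff fun x => ?_
  rw [← YoungDiagram.mem_iff_lt_rowLen, diagramOfRowLens, dif_pos hf, ← YoungDiagram.mem_cells]
  simp only [mem_filter, mem_product, mem_range]
  have := hf (Nat.zero_le r)
  split_ifs with h <;> simp [h]; omega

end YoungDiagram

def jacobiTrudi (N : ℕ) (d : ℕ → ℤ) : Sym :=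
  Matrix.det (Matrix.of fun i j : Fin N => hFZ (d i + j))

lemma k_smul_pderivK_jacobiTrudi {k : ℕ} (hk : 0 < k) (N : ℕ) (d : ℕ → ℤ) :
    (k : ℂ) • pderivK k (jacobiTrudi N d) =
      ∑ i : Fin N, jacobiTrudi N (Function.update d i (d i - k)) := by
  rw [jacobiTrudi, pderivK, Derivation.map_det, smul_sum]
  refine sum_congr rfl fun i _ => ?_
  rw [Nat.cast_smul_eq_nsmul, nsmul_eq_mul, ← Matrix.det_updateRow_smul, jacobiTrudi]
  refine congrArg Matrix.det (Matrix.ext fun r j => ?_)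
  rw [Matrix.of_apply]
  by_cases hr : r = i
  · subst hr
    rw [Matrix.updateRow_self, Pi.smul_apply, smul_eq_mul, ← nsmul_eq_mul,
      ← Nat.cast_smul_eq_nsmul ℂ, ← pderivK, Matrix.of_apply, k_smul_pderivK_hFZ hk,
      Function.update_self]
    ring_nf
  · rw [Matrix.updateRow_ne hr, Matrix.of_apply, Function.update_of_ne (Fin.val_injective.ne hr)]

lemma jacobiTrudi_eq_zero_of_eq {N : ℕ} {d : ℕ → ℤ} {i j : ℕ} (hi : i < N) (hj : j < N)
    (hij : i ≠ j) (h : d i = d j) : jacobiTrudi N d = 0 :=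
  Matrix.det_zero_of_row_eq (i := ⟨i, hi⟩) (j := ⟨j, hj⟩) (by simpa using hij) <| by
    ext col
    simp [h]

lemma jacobiTrudi_eq_zero_of_le_neg {N : ℕ} {d : ℕ → ℤ} {i : ℕ} (hi : i < N)
    (h : d i + N ≤ 0) : jacobiTrudi N d = 0 :=
  Matrix.det_eq_zero_of_row_eq_zero ⟨i, hi⟩ fun col => hFZ_of_neg (by simp; omega)

lemma jacobiTrudi_comp_swap {N : ℕ} (d : ℕ → ℤ) {a b : ℕ} (ha : a < N) (hb : b < N)
    (hab : a ≠ b) : jacobiTrudi N (d ∘ Equiv.swap a b) = -jacobiTrudi N d := by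
  have hswap : ∀ i : Fin N, Equiv.swap a b (i : ℕ) = (Equiv.swap ⟨a, ha⟩ ⟨b, hb⟩ i : Fin N) := by
    intro i
    simp only [Equiv.swap_apply_def, Fin.ext_iff]
    split_ifs <;> rfl
  have hM : (Matrix.of fun i j : Fin N => hFZ ((d ∘ Equiv.swap a b) i + j)) =
      (Matrix.of fun i j : Fin N => hFZ (d i + j)).submatrix (Equiv.swap ⟨a, ha⟩ ⟨b, hb⟩) id := by
    ext i j
    simp [hswap]
  rw [jacobiTrudi, hM, Matrix.det_permute, Equiv.Perm.sign_swap (by simpa using hab)]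
  simp [jacobiTrudi]

lemma jacobiTrudi_succ {N : ℕ} {d : ℕ → ℤ} (hd : d N = -N) :
    jacobiTrudi (N + 1) d = jacobiTrudi N d := by
  rw [jacobiTrudi, Matrix.det_succ_row _ (Fin.last N), sum_eq_single (Fin.last N)]
  · simp only [Matrix.of_apply, Fin.val_last, hd, neg_add_cancel, hFZ_zero, ← two_mul,
      pow_mul, neg_one_sq, one_pow, one_mul, Fin.succAbove_last]
    rfl
  · intro j _ hj
    have : (j : ℕ) < N := Fin.val_lt_last hj
    rw [Matrix.of_apply, Fin.val_last, hd, hFZ_of_neg (by omega), mul_zero, zero_mul]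
  · exact fun h => absurd (mem_univ _) h

lemma jacobiTrudi_eq_of_le {M N : ℕ} (hMN : M ≤ N) {d : ℕ → ℤ}
    (hd : ∀ r, M ≤ r → d r = -r) : jacobiTrudi N d = jacobiTrudi M d := by
  induction N, hMN using Nat.le_induction with
  | base => rfl
  | succ N hMN ih => rw [jacobiTrudi_succ (hd N hMN), ih]

lemma sF_eq_jacobiTrudi {l : YoungDiagram} {N : ℕ} (hN : plen l ≤ N) :
    sF l = jacobiTrudi N (shiftedParts l) := by
  rw [jacobiTrudi_eq_of_le hN fun r hr => shiftedParts_of_plen_le hr, sF, jacobiTrudi]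
  congr 1
  ext i j
  simp only [Matrix.of_apply, shiftedParts]
  ring_nf

/-- `c` with the entry in slot `i` deleted and `v` inserted in slot `t ≥ i`. -/
def moveDown (c : ℕ → ℤ) (v : ℤ) (i t : ℕ) (r : ℕ) : ℤ :=
  if r < i then c r else if r < t then c (r + 1) else if r = t then v else c r

lemma moveDown_of_lt_top {c : ℕ → ℤ} {v : ℤ} {i t r : ℕ} (h : r < i) :
    moveDown c v i t r = c r :=
  if_pos h

lemma moveDown_of_mem {c : ℕ → ℤ} {v : ℤ} {i t r : ℕ} (hir : i ≤ r) (hrt : r < t) :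
    moveDown c v i t r = c (r + 1) := by
  simp [moveDown, hrt, not_lt.mpr hir]

lemma moveDown_bottom {c : ℕ → ℤ} {v : ℤ} {i t : ℕ} (hit : i ≤ t) : moveDown c v i t t = v := by
  simp [moveDown, not_lt.mpr hit]

lemma moveDown_of_bottom_lt {c : ℕ → ℤ} {v : ℤ} {i t r : ℕ} (h : t < r) :
    moveDown c v i t r = c r := by
  unfold moveDown
  split_ifs <;> first | rfl | omega

lemma moveDown_self (c : ℕ → ℤ) (v : ℤ) (i : ℕ) : moveDown c v i i = Function.update c i v := by
  ext r
  rcases lt_trichotomy r i with h | rfl | h <;> simp [moveDown, Function.update, *] <;> omega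

lemma moveDown_succ (c : ℕ → ℤ) (v : ℤ) {i t : ℕ} (hit : i ≤ t) :
    moveDown c v i (t + 1) = moveDown c v i t ∘ Equiv.swap t (t + 1) := by
  ext r
  simp only [Function.comp_apply, Equiv.swap_apply_def]
  split_ifs <;> simp [moveDown, *] <;> omega

lemma moveDown_strictAnti {c : ℕ → ℤ} (hc : StrictAnti c) {v : ℤ} {i t : ℕ}
    (hvt : v < c t) (hvt' : c (t + 1) < v) : StrictAnti (moveDown c v i t) := by
  have hlt : ∀ y ≤ t, v < c y := fun y hy => hvt.trans_le (hc.antitone hy)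
  have hgt : ∀ y, t < y → c y < v := fun y hy => (hc.antitone hy).trans_lt hvt'
  refine strictAnti_nat_of_succ_lt fun r => ?_
  unfold moveDown
  split_ifs <;>
    first | exact hc (by omega) | exact hlt _ (by omega) | exact hgt _ (by omega) | omega

lemma jacobiTrudi_update_eq_moveDown {N : ℕ} (c : ℕ → ℤ) (v : ℤ) {i t : ℕ} (hit : i ≤ t)
    (htN : t < N) :
    jacobiTrudi N (Function.update c i v) =
      (-1 : ℂ) ^ (t - i) • jacobiTrudi N (moveDown c v i t) := by
  induction t, hit using Nat.le_induction with
  | base => simp [moveDown_self]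
  | succ t hit ih =>
    rw [ih (by omega), moveDown_succ c v hit, jacobiTrudi_comp_swap _ (by omega) htN (by omega),
      Nat.sub_add_comm hit, pow_succ, mul_smul, smul_neg, neg_smul, one_smul, neg_neg]

section Ribbon

def AdjIn (s : Finset (ℕ × ℕ)) (a b : ℕ × ℕ) : Prop := a ∈ s ∧ b ∈ s ∧ adjCell a b

instance (s : Finset (ℕ × ℕ)) : Std.Symm (AdjIn s) where
  symm _ _ h := ⟨h.2.1, h.1, by have := h.2.2; unfold adjCell at this ⊢; tauto⟩

def NoSquare (s : Finset (ℕ × ℕ)) : Prop :=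
  ¬ ∃ i j : ℕ, (i, j) ∈ s ∧ (i + 1, j) ∈ s ∧ (i, j + 1) ∈ s ∧ (i + 1, j + 1) ∈ s

lemma isRibbon_iff {μ l : YoungDiagram} {k : ℕ} :
    IsRibbon μ l k ↔ μ ≤ l ∧ (l.cells \ μ.cells).card = k ∧
      (∀ c ∈ l.cells \ μ.cells, ∀ d ∈ l.cells \ μ.cells,
        Relation.ReflTransGen (AdjIn (l.cells \ μ.cells)) c d) ∧ NoSquare (l.cells \ μ.cells) :=
  Iff.rfl

lemma exists_vertical_of_reflTransGen {s : Finset (ℕ × ℕ)} {a b : ℕ × ℕ}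
    (h : Relation.ReflTransGen (AdjIn s) a b) {r : ℕ} (ha : a.1 ≤ r) (hb : r < b.1) :
    ∃ x, (r, x) ∈ s ∧ (r + 1, x) ∈ s := by
  induction h with
  | refl => omega
  | @tail m c _ hmc ih =>
    by_cases hm : r < m.1
    · exact ih hm
    · obtain ⟨hms, hcs, hadj⟩ := hmc
      obtain ⟨m1, m2⟩ := m
      obtain ⟨c1, c2⟩ := c
      simp only [adjCell] at hadj hm hb
      obtain ⟨rfl, rfl⟩ : m1 = r ∧ c1 = r + 1 := by omega
      obtain rfl : c2 = m2 := by omega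
      exact ⟨c2, hms, hcs⟩

variable {μ l : YoungDiagram} {i t : ℕ}

/-- The row-length description of a ribbon `λ ∖ μ` with top row `i` and bottom row `t`. -/
structure RibbonShape (μ l : YoungDiagram) (i t : ℕ) : Prop where
  top_le_bottom : i ≤ t
  rowLen_eq : ∀ r, r < i ∨ t < r → μ.rowLen r = l.rowLen r
  rowLen_add_one : ∀ r, i ≤ r → r < t → μ.rowLen r + 1 = l.rowLen (r + 1)
  rowLen_bottom_lt : μ.rowLen t < l.rowLen t

namespace RibbonShape

lemma rowLen_lt (h : RibbonShape μ l i t) {r : ℕ} (hir : i ≤ r) (hrt : r ≤ t) :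
    μ.rowLen r < l.rowLen r := by
  rcases hrt.lt_or_eq with hrt | rfl
  · have := h.rowLen_add_one r hir hrt
    have := l.rowLen_anti r (r + 1) (by omega)
    omega
  · exact h.rowLen_bottom_lt

lemma le (h : RibbonShape μ l i t) : μ ≤ l := le_iff_rowLen_le.mpr fun r => by
  by_cases hr : r < i ∨ t < r
  · exact (h.rowLen_eq r hr).le
  · exact (h.rowLen_lt (by omega) (by omega)).le

lemma bottom_lt_plen (h : RibbonShape μ l i t) : t < plen l :=
  rowLen_pos_iff_lt_plen.mp (by have := h.rowLen_bottom_lt; omega)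

lemma mem_sdiff_iff (h : RibbonShape μ l i t) {r x : ℕ} :
    (r, x) ∈ l.cells \ μ.cells ↔ (i ≤ r ∧ r ≤ t) ∧ μ.rowLen r ≤ x ∧ x < l.rowLen r := by
  rw [mem_sdiff_cells_iff]
  by_cases hr : r < i ∨ t < r
  · have := h.rowLen_eq r hr
    omega
  · omega

lemma shiftedParts_eq (h : RibbonShape μ l i t) {r : ℕ} (hir : i ≤ r) (hrt : r < t) :
    shiftedParts μ r = shiftedParts l (r + 1) := by
  have := h.rowLen_add_one r hir hrt
  unfold shiftedParts
  omega

lemma card_sdiff (h : RibbonShape μ l i t) :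
    ((l.cells \ μ.cells).card : ℤ) = shiftedParts l i - shiftedParts μ t := by
  have ht := h.bottom_lt_plen
  have hsub : Ico i (t + 1) ⊆ range (plen l) := fun r hr => by
    simp only [mem_Ico, mem_range] at hr ⊢
    omega
  rw [card_sdiff_cells h.le le_rfl, ← sum_subset hsub fun r _ hr => by
    rw [h.rowLen_eq r (by simp only [mem_Ico] at hr; omega), sub_self],
    sum_Ico_succ_top h.top_le_bottom]
  have hmid : ∀ r ∈ Ico i t, ((l.rowLen r : ℤ) - μ.rowLen r) =
      -(shiftedParts l (r + 1) - shiftedParts l r) := fun r hr => by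
    rw [mem_Ico] at hr
    rw [← h.shiftedParts_eq hr.1 hr.2]
    unfold shiftedParts
    ring
  rw [sum_congr rfl hmid, sum_neg_distrib, sum_Ico_sub _ h.top_le_bottom]
  unfold shiftedParts
  ring

lemma reflTransGen_row (h : RibbonShape μ l i t) {r x y : ℕ} (hir : i ≤ r) (hrt : r ≤ t)
    (hx : μ.rowLen r ≤ x) (hxy : x ≤ y) (hy : y < l.rowLen r) :
    Relation.ReflTransGen (AdjIn (l.cells \ μ.cells)) (r, x) (r, y) := by
  induction y, hxy using Nat.le_induction with
  | base => rfl
  | succ y hxy ih =>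
    refine (ih (by omega)).tail ⟨?_, ?_, Or.inl ⟨rfl, Or.inr rfl⟩⟩ <;>
      exact h.mem_sdiff_iff.mpr ⟨⟨hir, hrt⟩, by omega, by omega⟩

lemma reflTransGen_top (h : RibbonShape μ l i t) {r : ℕ} (hir : i ≤ r) (hrt : r ≤ t) :
    Relation.ReflTransGen (AdjIn (l.cells \ μ.cells)) (i, μ.rowLen i) (r, μ.rowLen r) := by
  induction r, hir using Nat.le_induction with
  | base => rfl
  | succ r hir ih =>
    have hstep := h.rowLen_add_one r hir (by omega)
    have hanti := μ.rowLen_anti r (r + 1) (by omega)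
    have hdown : AdjIn (l.cells \ μ.cells) (r, μ.rowLen r) (r + 1, μ.rowLen r) :=
      ⟨h.mem_sdiff_iff.mpr ⟨⟨hir, by omega⟩, le_rfl, h.rowLen_lt hir (by omega)⟩,
        h.mem_sdiff_iff.mpr ⟨⟨by omega, hrt⟩, hanti, by omega⟩, Or.inr ⟨rfl, Or.inr rfl⟩⟩
    exact ((ih (by omega)).tail hdown).trans
      (Std.Symm.symm _ _ (h.reflTransGen_row (by omega) hrt le_rfl hanti (by omega)))

lemma connCells (h : RibbonShape μ l i t) : ConnCells (l.cells \ μ.cells) := by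
  have hbase : ∀ c ∈ l.cells \ μ.cells,
      Relation.ReflTransGen (AdjIn (l.cells \ μ.cells)) (i, μ.rowLen i) c := by
    rintro ⟨r, x⟩ hc
    obtain ⟨⟨hir, hrt⟩, hx, hxl⟩ := h.mem_sdiff_iff.mp hc
    exact (h.reflTransGen_top hir hrt).trans (h.reflTransGen_row hir hrt le_rfl hx hxl)
  exact fun c hc d hd => (Std.Symm.symm _ _ (hbase c hc)).trans (hbase d hd)

lemma noSquare (h : RibbonShape μ l i t) : NoSquare (l.cells \ μ.cells) := by
  rintro ⟨a, b, h1, -, -, h4⟩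
  obtain ⟨⟨hia, -⟩, hb, -⟩ := h.mem_sdiff_iff.mp h1
  obtain ⟨⟨-, hat⟩, -, hb'⟩ := h.mem_sdiff_iff.mp h4
  have := h.rowLen_add_one a hia (by omega)
  omega

lemma ribbonHeight_eq (h : RibbonShape μ l i t) : ribbonHeight μ l = t - i := by
  have himage : (l.cells \ μ.cells).image Prod.fst = Icc i t := by
    ext r
    simp only [mem_image, mem_Icc, Prod.exists, exists_and_right, exists_eq_right]
    constructor
    · rintro ⟨x, hx⟩
      exact (h.mem_sdiff_iff.mp hx).1
    · rintro hr
      exact ⟨μ.rowLen r, h.mem_sdiff_iff.mpr ⟨hr, le_rfl, h.rowLen_lt hr.1 hr.2⟩⟩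
  rw [ribbonHeight, himage, Nat.card_Icc]
  omega

lemma isRibbon (h : RibbonShape μ l i t) : IsRibbon μ l (l.cells \ μ.cells).card :=
  ⟨h.le, rfl, h.connCells, h.noSquare⟩

lemma top_eq (h : RibbonShape μ l i t) {i' t' : ℕ} (h' : RibbonShape μ l i' t') : i = i' := by
  by_contra hne
  rcases Nat.lt_or_gt_of_ne hne with hi | hi
  · exact (h.rowLen_lt le_rfl h.top_le_bottom).ne (h'.rowLen_eq i (Or.inl hi))
  · exact (h'.rowLen_lt le_rfl h'.top_le_bottom).ne (h.rowLen_eq i' (Or.inl hi))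

lemma eq_of_rowLen_bottom_eq (h : RibbonShape μ l i t) {ν : YoungDiagram}
    (h' : RibbonShape ν l i t) (hbot : μ.rowLen t = ν.rowLen t) : μ = ν := by
  refine eq_of_rowLen_eq fun r => ?_
  by_cases hr : r < i ∨ t < r
  · rw [h.rowLen_eq r hr, h'.rowLen_eq r hr]
  · rcases (show r < t ∨ r = t by omega) with hrt | rfl
    · have := h.rowLen_add_one r (by omega) hrt
      have := h'.rowLen_add_one r (by omega) hrt
      omega
    · exact hbot

end RibbonShape

lemma rowLen_add_one_eq_of_noSquare (hle : μ ≤ l) (hsq : NoSquare (l.cells \ μ.cells)) {r x : ℕ}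
    (h1 : (r, x) ∈ l.cells \ μ.cells) (h2 : (r + 1, x) ∈ l.cells \ μ.cells) :
    μ.rowLen r + 1 = l.rowLen (r + 1) := by
  rw [mem_sdiff_cells_iff] at h1 h2
  have := μ.rowLen_anti r (r + 1) (by omega)
  have := l.rowLen_anti r (r + 1) (by omega)
  have := (le_iff_rowLen_le.mp hle) (r + 1)
  by_contra hne
  refine hsq ⟨r, μ.rowLen r, ?_, ?_, ?_, ?_⟩ <;> rw [mem_sdiff_cells_iff] <;> omega

lemma exists_ribbonShape_of_isRibbon {k : ℕ} (hk : 0 < k) (h : IsRibbon μ l k) :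
    ∃ i t, RibbonShape μ l i t := by
  obtain ⟨hle, hcard, hconn, hsq⟩ := isRibbon_iff.mp h
  set S := l.cells \ μ.cells
  have hne : (S.image Prod.fst).Nonempty := (card_pos.mp (hcard ▸ hk)).image _
  obtain ⟨⟨i, x⟩, hx, hi⟩ := mem_image.mp ((S.image Prod.fst).min'_mem hne)
  obtain ⟨⟨t, y⟩, hy, ht⟩ := mem_image.mp ((S.image Prod.fst).max'_mem hne)
  have hrows : ∀ r z, (r, z) ∈ S → i ≤ r ∧ r ≤ t := fun r z hz => by
    have hr : r ∈ S.image Prod.fst := mem_image_of_mem Prod.fst hz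
    exact ⟨hi.trans_le (min'_le _ _ hr), (le_max' _ _ hr).trans_eq ht.symm⟩
  have hvert : ∀ r, i ≤ r → r < t → ∃ z, (r, z) ∈ S ∧ (r + 1, z) ∈ S :=
    fun r hir hrt => exists_vertical_of_reflTransGen (hconn _ hx _ hy) hir hrt
  refine ⟨i, t, (hrows t y hy).1, fun r hr => ?_, fun r hir hrt => ?_, ?_⟩
  · by_contra hne
    have hlt := lt_of_le_of_ne (le_iff_rowLen_le.mp hle r) hne
    have := hrows r _ (mem_sdiff_cells_iff.mpr ⟨le_rfl, hlt⟩)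
    omega
  · obtain ⟨z, hz1, hz2⟩ := hvert r hir hrt
    exact rowLen_add_one_eq_of_noSquare hle hsq hz1 hz2
  · exact (mem_sdiff_cells_iff.mp hy).1.trans_lt (mem_sdiff_cells_iff.mp hy).2

end Ribbon

section RemoveRibbon

/-- A `k`-ribbon with top row `i` can be removed from `λ`. -/
def IsRibbonTop (l : YoungDiagram) (k i : ℕ) : Prop :=
  i < plen l ∧ -(plen l : ℤ) < shiftedParts l i - k ∧
    ∀ j < plen l, shiftedParts l j ≠ shiftedParts l i - k

/-- The row where the lowered shifted part `c_i - k` lands when the sequence is re-sorted. -/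
def ribbonBottom (l : YoungDiagram) (k i : ℕ) : ℕ :=
  Nat.findGreatest (fun s => shiftedParts l i - k < shiftedParts l s) (plen l - 1)

def ribbonShiftedParts (l : YoungDiagram) (k i : ℕ) : ℕ → ℤ :=
  moveDown (shiftedParts l) (shiftedParts l i - k) i (ribbonBottom l k i)

def removeRibbon (l : YoungDiagram) (k i : ℕ) : YoungDiagram :=
  diagramOfRowLens (plen l) fun r => (ribbonShiftedParts l k i r + r).toNat

variable {l : YoungDiagram} {k i : ℕ}

lemma top_le_ribbonBottom (hk : 0 < k) (hv : IsRibbonTop l k i) : i ≤ ribbonBottom l k i :=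
  Nat.le_findGreatest (by have := hv.1; omega) (by omega)

lemma ribbonBottom_lt_plen (hv : IsRibbonTop l k i) : ribbonBottom l k i < plen l := by
  have := Nat.findGreatest_le (P := fun s => shiftedParts l i - k < shiftedParts l s) (plen l - 1)
  have := hv.1
  unfold ribbonBottom
  omega

lemma lt_shiftedParts_ribbonBottom (hk : 0 < k) (hv : IsRibbonTop l k i) :
    shiftedParts l i - k < shiftedParts l (ribbonBottom l k i) :=
  Nat.findGreatest_spec (P := fun s => shiftedParts l i - k < shiftedParts l s)
    (by have := hv.1; omega : i ≤ plen l - 1) (by omega)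

lemma shiftedParts_succ_ribbonBottom_lt (hv : IsRibbonTop l k i) :
    shiftedParts l (ribbonBottom l k i + 1) < shiftedParts l i - k := by
  by_cases hb : ribbonBottom l k i + 1 < plen l
  · have := Nat.findGreatest_is_greatest (lt_add_one (ribbonBottom l k i)) (by omega)
    have := hv.2.2 _ hb
    omega
  · rw [shiftedParts_of_plen_le (by omega)]
    have := hv.2.1
    push_cast
    omega

lemma ribbonShiftedParts_strictAnti (hk : 0 < k) (hv : IsRibbonTop l k i) :
    StrictAnti (ribbonShiftedParts l k i) :=
  moveDown_strictAnti (shiftedParts_strictAnti l) (lt_shiftedParts_ribbonBottom hk hv)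
    (shiftedParts_succ_ribbonBottom_lt hv)

lemma ribbonShiftedParts_of_plen_le (hv : IsRibbonTop l k i) {r : ℕ}
    (hr : plen l ≤ r) : ribbonShiftedParts l k i r = -r := by
  have := ribbonBottom_lt_plen hv
  rw [ribbonShiftedParts, moveDown_of_bottom_lt (by omega), shiftedParts_of_plen_le hr]

lemma antitone_ribbonShiftedParts_add (hk : 0 < k) (hv : IsRibbonTop l k i) :
    Antitone fun r => ribbonShiftedParts l k i r + r :=
  antitone_nat_of_succ_le fun r => by
    have := ribbonShiftedParts_strictAnti hk hv (lt_add_one r)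
    push_cast
    omega

lemma ribbonShiftedParts_add_nonneg (hk : 0 < k) (hv : IsRibbonTop l k i) (r : ℕ) :
    0 ≤ ribbonShiftedParts l k i r + r := by
  have := antitone_ribbonShiftedParts_add hk hv (le_max_left r (plen l))
  simp only [ribbonShiftedParts_of_plen_le hv (le_max_right r (plen l))] at this
  omega

lemma rowLen_removeRibbon (hk : 0 < k) (hv : IsRibbonTop l k i) (r : ℕ) :
    ((removeRibbon l k i).rowLen r : ℤ) = ribbonShiftedParts l k i r + r := by
  rw [removeRibbon, rowLen_diagramOfRowLens
    fun _ _ h => Int.toNat_le_toNat (antitone_ribbonShiftedParts_add hk hv h)]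
  split_ifs with hr
  · exact Int.toNat_of_nonneg (ribbonShiftedParts_add_nonneg hk hv r)
  · rw [ribbonShiftedParts_of_plen_le hv (not_lt.mp hr)]
    simp

lemma shiftedParts_removeRibbon (hk : 0 < k) (hv : IsRibbonTop l k i) :
    shiftedParts (removeRibbon l k i) = ribbonShiftedParts l k i := by
  ext r
  rw [shiftedParts, rowLen_removeRibbon hk hv]
  ring

lemma plen_removeRibbon_le (hk : 0 < k) (hv : IsRibbonTop l k i) :
    plen (removeRibbon l k i) ≤ plen l := by
  by_contra h
  have := rowLen_pos_iff_lt_plen.mpr (not_le.mp h)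
  have := rowLen_removeRibbon hk hv (plen l)
  rw [ribbonShiftedParts_of_plen_le hv le_rfl] at this
  omega

lemma ribbonShape_removeRibbon (hk : 0 < k) (hv : IsRibbonTop l k i) :
    RibbonShape (removeRibbon l k i) l i (ribbonBottom l k i) := by
  have hrow := rowLen_removeRibbon hk hv
  have hit := top_le_ribbonBottom hk hv
  refine ⟨hit, fun r hr => ?_, fun r hir hrt => ?_, ?_⟩
  · have hm : ribbonShiftedParts l k i r = shiftedParts l r := by
      rcases hr with hr | hr
      · exact moveDown_of_lt_top hr
      · exact moveDown_of_bottom_lt hr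
    have := hrow r
    rw [hm, shiftedParts] at this
    omega
  · have := hrow r
    rw [ribbonShiftedParts, moveDown_of_mem hir hrt, shiftedParts] at this
    push_cast at this
    omega
  · have := hrow (ribbonBottom l k i)
    rw [ribbonShiftedParts, moveDown_bottom hit] at this
    have := lt_shiftedParts_ribbonBottom hk hv
    unfold shiftedParts at *
    omega

lemma card_sdiff_removeRibbon (hk : 0 < k) (hv : IsRibbonTop l k i) :
    (l.cells \ (removeRibbon l k i).cells).card = k := by
  have := (ribbonShape_removeRibbon hk hv).card_sdiff
  rw [shiftedParts_removeRibbon hk hv, ribbonShiftedParts,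
    moveDown_bottom (top_le_ribbonBottom hk hv)] at this
  omega

lemma isRibbon_removeRibbon (hk : 0 < k) (hv : IsRibbonTop l k i) :
    IsRibbon (removeRibbon l k i) l k := by
  simpa only [card_sdiff_removeRibbon hk hv] using (ribbonShape_removeRibbon hk hv).isRibbon

namespace RibbonShape

variable {μ : YoungDiagram} {t : ℕ}

lemma shiftedParts_bottom_lt (h : RibbonShape μ l i t) {j : ℕ} (hj : j ≤ t) :
    shiftedParts μ t < shiftedParts l j := by
  have := h.rowLen_bottom_lt
  have := (shiftedParts_strictAnti l).antitone hj
  unfold shiftedParts at *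
  omega

lemma shiftedParts_lt_bottom (h : RibbonShape μ l i t) {j : ℕ} (hj : t < j) :
    shiftedParts l j < shiftedParts μ t := by
  have := h.rowLen_eq j (Or.inr hj)
  have := shiftedParts_strictAnti μ hj
  unfold shiftedParts at *
  omega

lemma shiftedParts_bottom_eq (h : RibbonShape μ l i t) (hcard : (l.cells \ μ.cells).card = k) :
    shiftedParts μ t = shiftedParts l i - k := by
  have := h.card_sdiff
  omega

lemma isRibbonTop (h : RibbonShape μ l i t) (hcard : (l.cells \ μ.cells).card = k) :
    IsRibbonTop l k i := by
  have ht := h.bottom_lt_plen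
  rw [IsRibbonTop, ← h.shiftedParts_bottom_eq hcard]
  refine ⟨by have := h.top_le_bottom; omega, by unfold shiftedParts; omega, fun j _ => ?_⟩
  rcases le_or_gt j t with hj | hj
  · exact (h.shiftedParts_bottom_lt hj).ne'
  · exact (h.shiftedParts_lt_bottom hj).ne

lemma ribbonBottom_eq (h : RibbonShape μ l i t) (hcard : (l.cells \ μ.cells).card = k) :
    ribbonBottom l k i = t := by
  have ht := h.bottom_lt_plen
  rw [ribbonBottom, Nat.findGreatest_eq_iff, ← h.shiftedParts_bottom_eq hcard]
  exact ⟨by omega, fun _ => h.shiftedParts_bottom_lt le_rfl,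
    fun j hj _ => not_lt.mpr (h.shiftedParts_lt_bottom hj).le⟩

lemma eq_removeRibbon (hk : 0 < k) (h : RibbonShape μ l i t)
    (hcard : (l.cells \ μ.cells).card = k) : μ = removeRibbon l k i := by
  have hv := h.isRibbonTop hcard
  have hshape := ribbonShape_removeRibbon hk hv
  rw [h.ribbonBottom_eq hcard] at hshape
  refine h.eq_of_rowLen_bottom_eq hshape ?_
  have h1 := h.shiftedParts_bottom_eq hcard
  have h2 := congrFun (shiftedParts_removeRibbon hk hv) t
  rw [ribbonShiftedParts, h.ribbonBottom_eq hcard, moveDown_bottom h.top_le_bottom, ← h1] at h2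
  unfold shiftedParts at h2
  omega

end RibbonShape

lemma exists_eq_removeRibbon_of_isRibbon (hk : 0 < k) {μ : YoungDiagram}
    (h : IsRibbon μ l k) : ∃ i, IsRibbonTop l k i ∧ μ = removeRibbon l k i := by
  obtain ⟨i, t, hshape⟩ := exists_ribbonShape_of_isRibbon hk h
  exact ⟨i, hshape.isRibbonTop h.2.1, hshape.eq_removeRibbon hk h.2.1⟩

lemma ribbonHeight_removeRibbon (hk : 0 < k) (hv : IsRibbonTop l k i) :
    ribbonHeight (removeRibbon l k i) l = ribbonBottom l k i - i :=
  (ribbonShape_removeRibbon hk hv).ribbonHeight_eq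

lemma removeRibbon_injOn (hk : 0 < k) : Set.InjOn (removeRibbon l k) {i | IsRibbonTop l k i} :=
  fun _ hi _ hj hij =>
    (ribbonShape_removeRibbon hk hi).top_eq (hij ▸ ribbonShape_removeRibbon hk hj)

end RemoveRibbon

section DualMurnaghanNakayama

variable {l : YoungDiagram} {k i : ℕ}

lemma jacobiTrudi_update_of_isRibbonTop (hk : 0 < k) (hv : IsRibbonTop l k i) :
    jacobiTrudi (plen l) (Function.update (shiftedParts l) i (shiftedParts l i - k)) =
      (-1 : ℂ) ^ (ribbonBottom l k i - i) • sF (removeRibbon l k i) := by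
  rw [jacobiTrudi_update_eq_moveDown _ _ (top_le_ribbonBottom hk hv) (ribbonBottom_lt_plen hv),
    sF_eq_jacobiTrudi (plen_removeRibbon_le hk hv), shiftedParts_removeRibbon hk hv,
    ribbonShiftedParts]

/-- Lowering `c_i` by `k` either collides with another shifted part (two equal rows) or pushes
it to `≤ -l(λ)` (a zero row). -/
lemma jacobiTrudi_update_of_not_isRibbonTop (hk : 0 < k) (hi : i < plen l)
    (hv : ¬ IsRibbonTop l k i) :
    jacobiTrudi (plen l) (Function.update (shiftedParts l) i (shiftedParts l i - k)) = 0 := by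
  by_cases hlow : -(plen l : ℤ) < shiftedParts l i - k
  · obtain ⟨j, hj, hji⟩ : ∃ j < plen l, shiftedParts l j = shiftedParts l i - k := by
      by_contra! h
      exact hv ⟨hi, hlow, h⟩
    have hne : j ≠ i := by rintro rfl; omega
    refine jacobiTrudi_eq_zero_of_eq hj hi hne ?_
    rw [Function.update_of_ne hne, Function.update_self, hji]
  · exact jacobiTrudi_eq_zero_of_le_neg hi (by rw [Function.update_self]; omega)

lemma k_smul_pderivK_sF (hk : 0 < k) (l : YoungDiagram) :
    (k : ℂ) • pderivK k (sF l) = ∑ i ∈ range (plen l) with IsRibbonTop l k i,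
      (-1 : ℂ) ^ (ribbonBottom l k i - i) • sF (removeRibbon l k i) := by
  rw [sF_eq_jacobiTrudi le_rfl, k_smul_pderivK_jacobiTrudi hk,
    Fin.sum_univ_eq_sum_range (fun i => jacobiTrudi (plen l)
      (Function.update (shiftedParts l) i (shiftedParts l i - k))), sum_filter]
  refine sum_congr rfl fun i hi => ?_
  split_ifs with hv
  · exact jacobiTrudi_update_of_isRibbonTop hk hv
  · exact jacobiTrudi_update_of_not_isRibbonTop hk (mem_range.mp hi) hv

end DualMurnaghanNakayama

/-- **Dual Murnaghan–Nakayama rule** (Corollary 3.3): in the ring of symmetric functions,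
`k ∂/∂p_k s_λ = ∑_{μ →_k λ} (-1)^{ht(λ∖μ)} s_μ`. -/
theorem dual_MN (l : YoungDiagram) (k : ℕ) (hk : 0 < k) :
    (k : ℂ) • pderivK k (sF l) =
      ∑ᶠ μ : YoungDiagram,
        if IsRibbon μ l k then ((-1 : ℂ) ^ ribbonHeight μ l) • sF μ else 0 := by
  set tops := {i ∈ range (plen l) | IsRibbonTop l k i}
  have hsupp : ∀ μ, IsRibbon μ l k → μ ∈ tops.image (removeRibbon l k) := fun μ h => by
    obtain ⟨i, hv, rfl⟩ := exists_eq_removeRibbon_of_isRibbon hk h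
    exact mem_image_of_mem _ (mem_filter.mpr ⟨mem_range.mpr hv.1, hv⟩)
  have hinj : Set.InjOn (removeRibbon l k) tops := fun i hi j hj =>
    removeRibbon_injOn hk (mem_filter.mp hi).2 (mem_filter.mp hj).2
  rw [finsum_eq_finsetSum_of_support_subset (s := tops.image (removeRibbon l k)) _
      fun μ hμ => hsupp μ (by by_contra h; simp [h] at hμ),
    sum_image hinj, k_smul_pderivK_sF hk]
  refine sum_congr rfl fun i hi => ?_
  have hv := (mem_filter.mp hi).2
  rw [if_pos (isRibbon_removeRibbon hk hv), ribbonHeight_removeRibbon hk hv]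

end RMT
end
end

section
/- Let g be an N×N unitary matrix with det(−g) ≠ −1. Then: (1) for all z ∈ ℂ ∖ ℝ_{≤0}, Λ_g(z) = Λ_{g^{-1}}(z^{-1}); and (2) for all z ∈ ℂ ∖ ℝ_{≤0} that are not eigenvalues of g, z·Λ'_g(z)/Λ_g(z) = −z^{-1}·Λ'_{g^{-1}}(z^{-1})/Λ_{g^{-1}}(z^{-1}). -/
open scoped BigOperators
open MeasureTheory

noncomputable section

namespace RMT

attribute [local instance] Classical.propDecidable

/-!
Because `g⁻¹ = gᴴ`, factoring `1 - z⁻¹ g = z⁻¹ (-g) (1 - z g⁻¹)` gives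
`χ_{g⁻¹}(z⁻¹) = z^{-N} det(-g) χ_g(z)`, and `det(-g)` is a unit complex number with
`det(-g⁻¹) = det(-g)⁻¹`. Off the negative real axis the principal powers commute with inversion,
so `det(-g)^{1/2}` and `z^{-N/2}` absorb exactly the factors `det(-g)` and `z^{-N}`: this is (1).
Since (1) holds on the open slit plane, differentiating it through `z ↦ z⁻¹` gives (2).
-/

lemma _root_.Complex.mem_slitPlane_of_notMem_nonposReals {z : ℂ}
    (h : z ∉ {w : ℂ | w.im = 0 ∧ w.re ≤ 0}) : z ∈ Complex.slitPlane := by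
  rw [Complex.mem_slitPlane_iff_not_le_zero, Complex.le_def]
  simpa [and_comm] using h

lemma _root_.Complex.inv_mem_slitPlane {z : ℂ} (hz : z ∈ Complex.slitPlane) :
    z⁻¹ ∈ Complex.slitPlane := by
  rw [Complex.mem_slitPlane_iff_arg] at hz ⊢
  refine ⟨?_, inv_ne_zero hz.2⟩
  rw [Complex.arg_inv, if_neg hz.1]
  intro h
  linarith [Complex.neg_pi_lt_arg z]

lemma _root_.Complex.mem_slitPlane_of_norm_eq_one {d : ℂ} (hd : ‖d‖ = 1) (hd' : d ≠ -1) :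
    d ∈ Complex.slitPlane := by
  have hsphere : ({d} : Set ℂ) ⊆ Metric.sphere 0 1 := by simpa using hd
  simpa [Ne.symm hd'] using
    (Complex.subset_slitPlane_iff_of_subset_sphere hsphere).2

lemma _root_.Complex.cpow_div_two_sq (x w : ℂ) : (x ^ (w / 2)) ^ 2 = x ^ w := by
  rw [← Complex.cpow_nat_mul]
  congr 1
  push_cast
  ring

lemma _root_.Matrix.eval_charpolyRev_eq_det {n R : Type*} [Fintype n] [DecidableEq n] [CommRing R]
    (M : Matrix n n R) (z : R) : M.charpolyRev.eval z = (1 - z • M).det := by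
  rw [Matrix.charpolyRev, ← Polynomial.coe_evalRingHom, RingHom.map_det]
  congr 1
  ext i j
  simp only [RingHom.mapMatrix_apply, Matrix.map_apply, Matrix.sub_apply, Matrix.one_apply,
    Matrix.smul_apply, smul_eq_mul, Polynomial.coe_evalRingHom, Polynomial.eval_sub,
    Polynomial.eval_mul, Polynomial.eval_X, Polynomial.eval_C, apply_ite (Polynomial.eval z),
    Polynomial.eval_one, Polynomial.eval_zero]

lemma _root_.Matrix.det_one_sub_inv_smul {n 𝕜 : Type*} [Fintype n] [DecidableEq n] [Field 𝕜]
    {A B : Matrix n n 𝕜} (hAB : A * B = 1) {z : 𝕜} (hz : z ≠ 0) :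
    (1 - z⁻¹ • A).det = (z ^ Fintype.card n)⁻¹ * (-A).det * (1 - z • B).det := by
  have h : 1 - z⁻¹ • A = z⁻¹ • ((-A) * (1 - z • B)) := by
    rw [Matrix.mul_sub, Matrix.mul_one, Matrix.mul_smul, Matrix.neg_mul, hAB, smul_sub,
      smul_neg, smul_smul, inv_mul_cancel₀ hz, one_smul]
    abel
  rw [h, Matrix.det_smul, Matrix.det_mul, inv_pow, mul_assoc]

lemma _root_.mul_deriv_eq_neg_inv_mul_of_eventuallyEq_comp_inv {𝕜 : Type*}
    [NontriviallyNormedField 𝕜] {f h : 𝕜 → 𝕜} {z h' : 𝕜} (hz : z ≠ 0)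
    (hf : f =ᶠ[nhds z] fun w => h w⁻¹) (hh : HasDerivAt h h' z⁻¹) :
    z * deriv f z = -(z⁻¹ * h') := by
  have hcomp : HasDerivAt f (h' * -(z ^ 2)⁻¹) z :=
    (hh.comp z (hasDerivAt_inv hz)).congr_of_eventuallyEq hf
  rw [hcomp.deriv]
  field_simp

section CompletedCharpoly

variable {N : ℕ}

lemma chi_eq_eval_charpolyRev (g : UG N) (z : ℂ) :
    chi g z = ((g⁻¹ : UG N) : Matrix (Fin N) (Fin N) ℂ).charpolyRev.eval z :=
  (Matrix.eval_charpolyRev_eq_det _ z).symm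

lemma differentiable_chi (g : UG N) : Differentiable ℂ (chi g) := by
  rw [show chi g = _ from funext (chi_eq_eval_charpolyRev g)]
  exact Polynomial.differentiable _

lemma differentiableAt_Lam (g : UG N) {z : ℂ} (hz : z ∈ Complex.slitPlane) :
    DifferentiableAt ℂ (Lam g) z :=
  ((differentiableAt_const _).mul (differentiableAt_id.cpow_const hz)).mul
    (differentiable_chi g z)

lemma chi_inv_inv (g : UG N) {z : ℂ} (hz : z ≠ 0) :
    chi g⁻¹ z⁻¹ = (z ^ N)⁻¹ * detNeg g * chi g z := by
  have hg : (g : Matrix (Fin N) (Fin N) ℂ) * ((g⁻¹ : UG N) : Matrix (Fin N) (Fin N) ℂ) = 1 :=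
    congrArg Subtype.val (mul_inv_cancel g)
  simpa [chi, detNeg] using Matrix.det_one_sub_inv_smul hg hz

lemma detNeg_mem_unitary (g : UG N) : detNeg g ∈ unitary ℂ :=
  Matrix.det_of_mem_unitary (-g).2

lemma detNeg_inv (g : UG N) : detNeg g⁻¹ = (detNeg g)⁻¹ := by
  have hstar : detNeg g⁻¹ = star (detNeg g) := by
    rw [detNeg, detNeg, ← Matrix.det_conjTranspose, Matrix.conjTranspose_neg]
    rfl
  rw [hstar]
  exact (inv_eq_of_mul_eq_one_left (detNeg_mem_unitary g).1).symm

lemma Lam_inv_inv {g : UG N} (hdet : detNeg g ≠ -1) {z : ℂ} (hz : z ∈ Complex.slitPlane) :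
    Lam g⁻¹ z⁻¹ = Lam g z := by
  have hd : detNeg g ∈ Complex.slitPlane :=
    Complex.mem_slitPlane_of_norm_eq_one (CStarRing.norm_of_mem_unitary (detNeg_mem_unitary g)) hdet
  have hz0 := Complex.slitPlane_ne_zero hz
  rw [Lam, Lam, detNeg_inv, chi_inv_inv g hz0,
    Complex.inv_cpow _ _ (Complex.slitPlane_arg_ne_pi hd),
    Complex.inv_cpow _ _ (Complex.slitPlane_arg_ne_pi hz)]
  have hs : (detNeg g ^ ((1 : ℂ) / 2)) ^ 2 = detNeg g := by
    rw [Complex.cpow_div_two_sq, Complex.cpow_one]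
  have hc : (z ^ (-(N : ℂ) / 2)) ^ 2 = (z ^ N)⁻¹ := by
    rw [Complex.cpow_div_two_sq, Complex.cpow_neg, Complex.cpow_natCast]
  generalize detNeg g ^ ((1 : ℂ) / 2) = s at hs ⊢
  generalize z ^ (-(N : ℂ) / 2) = c at hc ⊢
  have hs0 : s ≠ 0 := ne_zero_pow two_ne_zero (hs ▸ Complex.slitPlane_ne_zero hd)
  have hc0 : c ≠ 0 := ne_zero_pow two_ne_zero (hc ▸ inv_ne_zero (pow_ne_zero N hz0))
  rw [← hs, ← hc]
  field_simp

end CompletedCharpoly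

theorem functional_equation_general (N : ℕ) (g : UG N) (hdet : detNeg g ≠ -1) :
    (∀ z : ℂ, z ∉ {w : ℂ | w.im = 0 ∧ w.re ≤ 0} → Lam g z = Lam g⁻¹ z⁻¹) ∧
    (∀ z : ℂ, z ∉ {w : ℂ | w.im = 0 ∧ w.re ≤ 0} →
      Matrix.det ((g : Matrix (Fin N) (Fin N) ℂ) - z • (1 : Matrix (Fin N) (Fin N) ℂ)) ≠ 0 →
      z * LamD g z / Lam g z = -(z⁻¹ * LamD g⁻¹ z⁻¹ / Lam g⁻¹ z⁻¹)) := by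
  refine ⟨fun z hz => (Lam_inv_inv hdet (Complex.mem_slitPlane_of_notMem_nonposReals hz)).symm,
    fun z hz _ => ?_⟩
  replace hz := Complex.mem_slitPlane_of_notMem_nonposReals hz
  have hLam : Lam g =ᶠ[nhds z] fun w => Lam g⁻¹ w⁻¹ := by
    filter_upwards [Complex.isOpen_slitPlane.mem_nhds hz] with w hw
    exact (Lam_inv_inv hdet hw).symm
  have hderiv := mul_deriv_eq_neg_inv_mul_of_eventuallyEq_comp_inv (Complex.slitPlane_ne_zero hz)
    hLam (differentiableAt_Lam g⁻¹ (Complex.inv_mem_slitPlane hz)).hasDerivAt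
  rw [LamD, LamD, hderiv, Lam_inv_inv hdet hz, neg_div]

/-- **Functional equation for completed characteristic polynomials** (Lemma 5.2). -/
theorem functional_equation (N : ℕ) (hN : 0 < N) (g : UG N) (hdet : detNeg g ≠ -1) :
    (∀ z : ℂ, z ∉ {w : ℂ | w.im = 0 ∧ w.re ≤ 0} → Lam g z = Lam g⁻¹ z⁻¹) ∧
    (∀ z : ℂ, z ∉ {w : ℂ | w.im = 0 ∧ w.re ≤ 0} →
      Matrix.det ((g : Matrix (Fin N) (Fin N) ℂ) - z • (1 : Matrix (Fin N) (Fin N) ℂ)) ≠ 0 →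
      z * LamD g z / Lam g z = -(z⁻¹ * LamD g⁻¹ z⁻¹ / Lam g⁻¹ z⁻¹)) :=
  functional_equation_general N g hdet

end RMT
end
end
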